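/- Let F = {f₁,…,fₙ} ⊂ ℂ[x₁,…,xₙ] be a polynomial system with an isolated singular zero p ∈ ℂⁿ, and assume rank(J(f₁,…,f_s)(p)) = rank(J(F)(p)) = s. For new variables α = (α₁,…,α_s), define h_j = α₁ ∂f₁/∂x_j + ⋯ + α_s ∂f_s/∂x_j + ∂f_{s+1}/∂x_j ∈ ℂ[x,α] for j = 1,…,n, and let G = {f₁,…,fₙ, h₁,…,hₙ}. Then there exists a unique α̂ ∈ ℂ^s such that G(p, α̂) = 0, and moreover (p, α̂) is an isolated zero of the system G = 0 in ℂ^{n+s}. -/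

import Mathlib

open MvPolynomial

/- The values `hⱼ(p, α)` are the entries of `α ᵥ* J₁ + r`, where `J₁` is the Jacobian of
`f₁,…,f_s` at `p` and `r` the row of `f_{s+1}`. Since `rank J₁ = rank J(F)(p) = s`, the rows of `J₁`
are linearly independent and span all rows of `J(F)(p)`, so `α ᵥ* J₁ = -r` has exactly one
solution `α̂`. Near `(p, α̂)` any zero `(x, α)` of `G` has `x` a zero of `F` close to `p`, so
`x = p`, and then `α = α̂`. -/

/-- The rank over ℂ of the Jacobian matrix of a finite polynomial system, evaluated at `p`. -/
noncomputable def jacRank {n : ℕ} {ι : Type*} [Fintype ι]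
    (g : ι → MvPolynomial (Fin n) ℂ) (p : Fin n → ℂ) : ℕ :=
  (Matrix.of fun (i : ι) (j : Fin n) => eval p (pderiv j (g i))).rank

/-- The polynomial `fᵢ ∈ ℂ[x₁,…,xₙ]` viewed inside `ℂ[x₁,…,xₙ,α₁,…,α_s]`, the variables
`x₁,…,xₙ` being the first `n` variables. -/
noncomputable def embX {n : ℕ} (s : ℕ) (g : MvPolynomial (Fin n) ℂ) :
    MvPolynomial (Fin (n + s)) ℂ :=
  rename (Fin.castAdd s) g

/-- The auxiliary polynomial
`h_j = α₁ ∂f₁/∂x_j + ⋯ + α_s ∂f_s/∂x_j + ∂f_{s+1}/∂x_j ∈ ℂ[x,α]`,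
where `α_i` is the `(n+i)`-th variable of `ℂ[x₁,…,xₙ,α₁,…,α_s]`. -/
noncomputable def hPoly {n s : ℕ} (hs : s < n) (f : Fin n → MvPolynomial (Fin n) ℂ)
    (j : Fin n) : MvPolynomial (Fin (n + s)) ℂ :=
  (∑ i : Fin s, X (Fin.natAdd n i) * embX s (pderiv j (f (Fin.castLE hs.le i)))) +
    embX s (pderiv j (f ⟨s, hs⟩))

namespace Matrix

variable {K ι κ m : Type*} [Field K] [Fintype ι] [Fintype κ] [Fintype m]

theorem linearIndependent_row_of_rank_eq_card {A : Matrix κ m K}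
    (h : A.rank = Fintype.card κ) : LinearIndependent K A.row := by
  rw [linearIndependent_iff_card_eq_finrank_span, Set.finrank, ← rank_eq_finrank_span_row, h]

theorem span_row_submatrix_eq_of_rank_eq (A : Matrix ι m K) (e : κ → ι)
    (h : (A.submatrix e id).rank = A.rank) :
    Submodule.span K (Set.range (A.submatrix e id).row) = Submodule.span K (Set.range A.row) := by
  refine Submodule.eq_of_le_of_finrank_eq
    (Submodule.span_mono (Set.range_subset_iff.2 fun k => ⟨e k, rfl⟩)) ?_
  rwa [← rank_eq_finrank_span_row, ← rank_eq_finrank_span_row]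

theorem existsUnique_vecMul_submatrix_eq (A : Matrix ι m K) (e : κ → ι)
    (hsub : (A.submatrix e id).rank = Fintype.card κ) (hA : A.rank = Fintype.card κ) {w : m → K}
    (hw : w ∈ Submodule.span K (Set.range A.row)) : ∃! c, c ᵥ* A.submatrix e id = w := by
  rw [← span_row_submatrix_eq_of_rank_eq A e (hsub.trans hA.symm), ← range_vecMulLinear] at hw
  obtain ⟨c, hc⟩ := hw
  exact ⟨c, hc, fun c' hc' => vecMul_injective_iff.2
    (linearIndependent_row_of_rank_eq_card hsub) (hc'.trans hc.symm)⟩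

end Matrix

theorem dist_comp_le_dist {ι κ α : Type*} [Fintype ι] [Fintype κ] [PseudoMetricSpace α]
    (x y : ι → α) (g : κ → ι) : dist (x ∘ g) (y ∘ g) ≤ dist x y :=
  (dist_pi_le_iff dist_nonneg).2 fun k => dist_le_pi_dist x y (g k)

theorem Fin.append_comp_castAdd {α : Type*} {m n : ℕ} (u : Fin m → α) (v : Fin n → α) :
    Fin.append u v ∘ Fin.castAdd n = u :=
  funext (Fin.append_left u v)

section AugmentedSystem

open Matrix

variable {n s : ℕ}

noncomputable def jacobianAt {ι : Type*} (g : ι → MvPolynomial (Fin n) ℂ) (p : Fin n → ℂ) :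
    Matrix ι (Fin n) ℂ :=
  Matrix.of fun i j => eval p (pderiv j (g i))

def IsAugmentedZero (hs : s < n) (f : Fin n → MvPolynomial (Fin n) ℂ)
    (y : Fin (n + s) → ℂ) : Prop :=
  (∀ i, eval y (embX s (f i)) = 0) ∧ ∀ j, eval y (hPoly hs f j) = 0

theorem eval_embX (y : Fin (n + s) → ℂ) (g : MvPolynomial (Fin n) ℂ) :
    eval y (embX s g) = eval (y ∘ Fin.castAdd s) g := by
  simp [embX, eval_rename]

theorem eval_embX_append (p : Fin n → ℂ) (a : Fin s → ℂ) (g : MvPolynomial (Fin n) ℂ) :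
    eval (Fin.append p a) (embX s g) = eval p g := by
  rw [eval_embX, Fin.append_comp_castAdd]

theorem eval_hPoly_append (hs : s < n) (f : Fin n → MvPolynomial (Fin n) ℂ) (p : Fin n → ℂ)
    (a : Fin s → ℂ) (j : Fin n) :
    eval (Fin.append p a) (hPoly hs f j) =
      (a ᵥ* (jacobianAt f p).submatrix (Fin.castLE hs.le) id + jacobianAt f p ⟨s, hs⟩) j := by
  simp [hPoly, eval_embX_append, jacobianAt, vecMul, dotProduct]

theorem isAugmentedZero_append_iff (hs : s < n) (f : Fin n → MvPolynomial (Fin n) ℂ)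
    (p : Fin n → ℂ) (a : Fin s → ℂ) :
    IsAugmentedZero hs f (Fin.append p a) ↔ (∀ i, eval p (f i) = 0) ∧
      a ᵥ* (jacobianAt f p).submatrix (Fin.castLE hs.le) id = -jacobianAt f p ⟨s, hs⟩ := by
  simp only [IsAugmentedZero, eval_embX_append, eval_hPoly_append, eq_neg_iff_add_eq_zero,
    _root_.funext_iff, Pi.add_apply, Pi.zero_apply]

theorem IsAugmentedZero.eval_comp_castAdd {hs : s < n} {f : Fin n → MvPolynomial (Fin n) ℂ}
    {y : Fin (n + s) → ℂ} (hy : IsAugmentedZero hs f y) (i : Fin n) :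
    eval (y ∘ Fin.castAdd s) (f i) = 0 := by
  rw [← eval_embX]
  exact hy.1 i

end AugmentedSystem

theorem augmented_system_unique_isolated_zero_general {n s : ℕ} (hs : s < n)
    (f : Fin n → MvPolynomial (Fin n) ℂ) (p : Fin n → ℂ)
    (hzero : ∀ i, eval p (f i) = 0)
    (hisolated : ∃ ε > 0, ∀ y : Fin n → ℂ, dist y p < ε → (∀ i, eval y (f i) = 0) → y = p)
    (hranks : jacRank (fun i : Fin s => f (Fin.castLE hs.le i)) p = s)
    (hrank : jacRank f p = s) :
    ∃ a : Fin s → ℂ,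
      ((∀ i, eval (Fin.append p a) (embX s (f i)) = 0) ∧
        (∀ j, eval (Fin.append p a) (hPoly hs f j) = 0)) ∧
      (∀ a' : Fin s → ℂ,
        ((∀ i, eval (Fin.append p a') (embX s (f i)) = 0) ∧
          (∀ j, eval (Fin.append p a') (hPoly hs f j) = 0)) → a' = a) ∧
      (∃ ε > 0, ∀ y : Fin (n + s) → ℂ, dist y (Fin.append p a) < ε →
        ((∀ i, eval y (embX s (f i)) = 0) ∧ (∀ j, eval y (hPoly hs f j) = 0)) →
        y = Fin.append p a) := by
  obtain ⟨a, ha, ha_unique⟩ := (jacobianAt f p).existsUnique_vecMul_submatrix_eq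
    (Fin.castLE hs.le) (hranks.trans (Fintype.card_fin s).symm)
    (hrank.trans (Fintype.card_fin s).symm)
    (neg_mem (Submodule.subset_span ⟨⟨s, hs⟩, rfl⟩))
  have hzero_iff (b : Fin s → ℂ) : IsAugmentedZero hs f (Fin.append p b) ↔ b = a := by
    rw [isAugmentedZero_append_iff, and_iff_right hzero]
    exact ⟨ha_unique b, fun hb => hb ▸ ha⟩
  refine ⟨a, (hzero_iff a).2 rfl, fun b hb => (hzero_iff b).1 hb, ?_⟩
  obtain ⟨ε, hε, hiso⟩ := hisolated
  refine ⟨ε, hε, fun y hy hGy => ?_⟩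
  have hdist : dist (y ∘ Fin.castAdd s) p < ε := by
    simpa only [Fin.append_comp_castAdd] using
      (dist_comp_le_dist y (Fin.append p a) (Fin.castAdd s)).trans_lt hy
  have hx : y ∘ Fin.castAdd s = p := hiso _ hdist (IsAugmentedZero.eval_comp_castAdd hGy)
  have hy_split : Fin.append p (y ∘ Fin.natAdd n) = y := hx ▸ Fin.append_castAdd_natAdd
  rw [← hy_split] at hGy ⊢
  rw [(hzero_iff _).1 hGy]

/-- Let `F = {f₁,…,fₙ} ⊂ ℂ[x₁,…,xₙ]` have an isolated singular zero
`p ∈ ℂⁿ` with `rank J(f₁,…,f_s)(p) = rank J(F)(p) = s`. With new variables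
`α = (α₁,…,α_s)` and `h_j = α₁ ∂f₁/∂x_j + ⋯ + α_s ∂f_s/∂x_j + ∂f_{s+1}/∂x_j`, let
`G = {f₁,…,fₙ,h₁,…,hₙ} ⊂ ℂ[x,α]`. Then there is a unique `α̂ ∈ ℂˢ` with `G(p,α̂) = 0`,
and moreover `(p,α̂)` is an isolated zero of `G = 0` in `ℂ^{n+s}`. -/
theorem augmented_system_unique_isolated_zero {n s : ℕ} (hs : s < n)
    (f : Fin n → MvPolynomial (Fin n) ℂ) (p : Fin n → ℂ)
    (hzero : ∀ i, eval p (f i) = 0)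
    (hisolated : ∃ ε > 0, ∀ y : Fin n → ℂ, dist y p < ε → (∀ i, eval y (f i) = 0) → y = p)
    (hsingular : jacRank f p < n)
    (hranks : jacRank (fun i : Fin s => f (Fin.castLE hs.le i)) p = s)
    (hrank : jacRank f p = s) :
    ∃ a : Fin s → ℂ,
      ((∀ i, eval (Fin.append p a) (embX s (f i)) = 0) ∧
        (∀ j, eval (Fin.append p a) (hPoly hs f j) = 0)) ∧
      (∀ a' : Fin s → ℂ,
        ((∀ i, eval (Fin.append p a') (embX s (f i)) = 0) ∧
          (∀ j, eval (Fin.append p a') (hPoly hs f j) = 0)) → a' = a) ∧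
      (∃ ε > 0, ∀ y : Fin (n + s) → ℂ, dist y (Fin.append p a) < ε →
        ((∀ i, eval y (embX s (f i)) = 0) ∧ (∀ j, eval y (hPoly hs f j) = 0)) →
        y = Fin.append p a) :=
  augmented_system_unique_isolated_zero_general hs f p hzero hisolated hranks hrank
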